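/- arXiv:1710.07940 — 2 statements merged into one kernel-verified Lean document; each statement's English description precedes it below -/
import Mathlib

section
/- Let γ be a 2n×2n real symplectic matrix with eigenvalue λ = e^{iθ₀} on the unit circle, and Jordan chains ξ_{i,j} as above with block sizes j_1 ≥ ... ≥ j_m. If j_i > j_{i'} (the i-th block is strictly larger than the i'-th), then (η_{i', j_{i'}}, η_{i,1})_G = 0, where η_{i,j} = (-i e^{iθ₀})^j ξ_{i,j}; i.e., the matrix X_{i,i'} = (η_{i,j_i}, η_{i',1})_G is block upper triangular with respect to the grouping by Jordan block size. -/
open Matrix Complex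

noncomputable def JmatR (n : ℕ) : Matrix (Fin n ⊕ Fin n) (Fin n ⊕ Fin n) ℝ :=
  Matrix.fromBlocks 0 1 (-1) 0

noncomputable def Jmat (n : ℕ) : Matrix (Fin n ⊕ Fin n) (Fin n ⊕ Fin n) ℂ :=
  Matrix.fromBlocks 0 1 (-1) 0

/-- The Krein form `(x,y)_G = i ⟨x, J y⟩`. -/
noncomputable def krein (n : ℕ) (x y : (Fin n ⊕ Fin n) → ℂ) : ℂ :=
  Complex.I * ∑ j, x j * (starRingEnd ℂ) ((Jmat n).mulVec y j)

/-!
Expanding the invariance `(γx, γy) = (x, y)` of a sesquilinear form along two Jordan chains of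
`γ` for a unimodular eigenvalue `λ` gives `λ b(j, k-1) + λ̄ b(j-1, k) = b(j-1, k-1)` for
`b(j, k) = (ξ_{i',j}, ξ_{i,k})`. Since `b(0, k) = 0`, induction on `j` shows `b(j, k) = 0`
whenever `j + k ≤ j_i`; the case `j = j_{i'}`, `k = 1` is the claim.
-/

def IsJordanChain {R M : Type*} [Ring R] [AddCommGroup M] [Module R M]
    (f : M → M) (μ : R) (x : ℕ → M) (p : ℕ) : Prop :=
  x 0 = 0 ∧ ∀ j, 1 ≤ j → j ≤ p → f (x j) = μ • x j - x (j - 1)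

section JordanChain

variable {R M : Type*} [CommRing R] [StarRing R] [AddCommGroup M] [Module R M]
  {B : M →ₗ[R] M →ₗ⋆[R] R} {f : M → M} {μ : R} {x y : ℕ → M} {p q : ℕ}

theorem IsJordanChain.form_recurrence (hf : ∀ u v, B (f u) (f v) = B u v)
    (hμ : star μ * μ = 1) (hx : IsJordanChain f μ x p) (hy : IsJordanChain f μ y q)
    {j k : ℕ} (hj : 1 ≤ j) (hjp : j ≤ p) (hk : 1 ≤ k) (hkq : k ≤ q) :
    μ * B (x j) (y (k - 1)) + star μ * B (x (j - 1)) (y k) = B (x (j - 1)) (y (k - 1)) := by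
  have h := hf (x j) (y k)
  rw [hx.2 j hj hjp, hy.2 k hk hkq] at h
  simp only [map_sub, map_smul, map_smulₛₗ, LinearMap.sub_apply, LinearMap.smul_apply,
    smul_eq_mul, starRingEnd_apply] at h
  linear_combination (B (x j) (y k)) * hμ - h

theorem IsJordanChain.form_eq_zero (hf : ∀ u v, B (f u) (f v) = B u v)
    (hμ : star μ * μ = 1) (hx : IsJordanChain f μ x p) (hy : IsJordanChain f μ y q) :
    ∀ j k, j ≤ p → 1 ≤ k → j + k ≤ q → B (x j) (y k) = 0 := by
  intro j
  induction j with
  | zero => intro k _ _ _; rw [hx.1, map_zero, LinearMap.zero_apply]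
  | succ j ih =>
    intro k hjp hk hjkq
    have h := hx.form_recurrence hf hμ hy (j := j + 1) (k := k + 1) (by omega) hjp (by omega)
      (by omega)
    simp only [Nat.add_sub_cancel, ih (k + 1) (by omega) (by omega) (by omega),
      ih k (by omega) hk (by omega), mul_zero, add_zero] at h
    exact (IsUnit.of_mul_eq_one_right _ hμ).mul_right_eq_zero.mp h

theorem IsJordanChain.form_last_first_eq_zero (hf : ∀ u v, B (f u) (f v) = B u v)
    (hμ : star μ * μ = 1) (hx : IsJordanChain f μ x p) (hy : IsJordanChain f μ y q)
    (hpq : p < q) : B (x p) (y 1) = 0 :=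
  hx.form_eq_zero hf hμ hy p 1 le_rfl le_rfl hpq

end JordanChain

theorem Jmat_eq_map (n : ℕ) : (JmatR n).map Complex.ofReal = Jmat n := by
  ext i j
  cases i <;> cases j <;>
    simp [JmatR, Jmat, Matrix.fromBlocks, Matrix.map_apply, Matrix.one_apply, apply_ite]

theorem star_ofReal_mulVec {ι κ : Type*} [Fintype κ] (A : Matrix ι κ ℝ) (v : κ → ℂ) :
    star (A.map Complex.ofReal *ᵥ v) = A.map Complex.ofReal *ᵥ star v := by
  ext j
  simp [Matrix.mulVec, dotProduct, Pi.star_apply, Complex.conj_ofReal]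

theorem krein_eq_dotProduct (n : ℕ) (x y : (Fin n ⊕ Fin n) → ℂ) :
    krein n x y = Complex.I * (x ⬝ᵥ (Jmat n *ᵥ star y)) := by
  rw [krein, ← Jmat_eq_map, ← star_ofReal_mulVec]
  rfl

theorem krein_mulVec_of_symplectic {n : ℕ} {γ : Matrix (Fin n ⊕ Fin n) (Fin n ⊕ Fin n) ℝ}
    (hγ : γᵀ * JmatR n * γ = JmatR n) (x y : (Fin n ⊕ Fin n) → ℂ) :
    krein n (γ.map Complex.ofReal *ᵥ x) (γ.map Complex.ofReal *ᵥ y) = krein n x y := by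
  have hsymp : (γ.map Complex.ofReal)ᵀ * Jmat n * γ.map Complex.ofReal = Jmat n := by
    have h := congrArg (Matrix.map · Complex.ofRealHom) hγ
    simp only [Matrix.map_mul, Matrix.transpose_map] at h
    rw [← Jmat_eq_map]
    exact h
  rw [krein_eq_dotProduct, krein_eq_dotProduct, star_ofReal_mulVec, Matrix.mulVec_mulVec,
    Matrix.dotProduct_mulVec, Matrix.vecMul_mulVec, ← Matrix.mul_assoc, hsymp,
    ← Matrix.dotProduct_mulVec]

noncomputable def kreinForm (n : ℕ) :
    ((Fin n ⊕ Fin n) → ℂ) →ₗ[ℂ] ((Fin n ⊕ Fin n) → ℂ) →ₗ⋆[ℂ] ℂ :=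
  LinearMap.mk₂'ₛₗ (RingHom.id ℂ) (starRingEnd ℂ) (krein n)
    (fun x x' y => by simp only [krein_eq_dotProduct, add_dotProduct, mul_add])
    (fun c x y => by
      simp only [krein_eq_dotProduct, smul_dotProduct, smul_eq_mul, RingHom.id_apply]; ring)
    (fun x y y' => by
      simp only [krein_eq_dotProduct, star_add, Matrix.mulVec_add, dotProduct_add, mul_add])
    (fun c x y => by
      simp only [krein_eq_dotProduct, star_smul, Matrix.mulVec_smul, dotProduct_smul,
        smul_eq_mul, starRingEnd_apply]; ring)

theorem kreinForm_apply (n : ℕ) (x y : (Fin n ⊕ Fin n) → ℂ) : kreinForm n x y = krein n x y :=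
  rfl

theorem star_exp_I_mul_mul_self (θ : ℝ) :
    star (Complex.exp (Complex.I * θ)) * Complex.exp (Complex.I * θ) = 1 := by
  rw [← starRingEnd_apply, Complex.conj_mul', mul_comm, Complex.norm_exp_ofReal_mul_I]
  norm_num

theorem krein_X_block_upper_triangular_general (n m : ℕ)
    (γ : Matrix (Fin n ⊕ Fin n) (Fin n ⊕ Fin n) ℝ)
    (hγ : γᵀ * JmatR n * γ = JmatR n)
    (θ0 : ℝ)
    (jsz : Fin m → ℕ)
    (ξ η : Fin m → ℕ → (Fin n ⊕ Fin n) → ℂ)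
    (hzero : ∀ i, ξ i 0 = 0)
    (hchain : ∀ i : Fin m, ∀ j : ℕ, 1 ≤ j → j ≤ jsz i →
      (γ.map Complex.ofReal).mulVec (ξ i j) = Complex.exp (Complex.I * θ0) • ξ i j - ξ i (j - 1))
    (hη : ∀ i j, η i j = ((-Complex.I) * Complex.exp (Complex.I * θ0)) ^ j • ξ i j)
    (i i' : Fin m) (hlt : jsz i' < jsz i) :
    krein n (η i' (jsz i')) (η i 1) = 0 := by
  have hJordan : ∀ i, IsJordanChain (γ.map Complex.ofReal *ᵥ ·) (Complex.exp (Complex.I * θ0))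
      (ξ i) (jsz i) := fun i => ⟨hzero i, hchain i⟩
  have hξ : kreinForm n (ξ i' (jsz i')) (ξ i 1) = 0 :=
    (hJordan i').form_last_first_eq_zero (krein_mulVec_of_symplectic hγ)
      (star_exp_I_mul_mul_self θ0) (hJordan i) hlt
  rw [hη, hη, ← kreinForm_apply, map_smulₛₗ, map_smul, LinearMap.smul_apply, hξ, smul_zero,
    smul_zero]

/-- Block upper-triangularity of `X`: if the `i`-th Jordan block is strictly larger than the
`i'`-th one, then `(η_{i',j_{i'}}, η_{i,1})_G = 0`. -/
theorem krein_X_block_upper_triangular (n m : ℕ)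
    (γ : Matrix (Fin n ⊕ Fin n) (Fin n ⊕ Fin n) ℝ)
    (hγ : γᵀ * JmatR n * γ = JmatR n)
    (θ0 : ℝ)
    (jsz : Fin m → ℕ) (hjsz : ∀ i, 1 ≤ jsz i)
    (hmono : ∀ i i' : Fin m, i ≤ i' → jsz i' ≤ jsz i)
    (ξ η : Fin m → ℕ → (Fin n ⊕ Fin n) → ℂ)
    (hzero : ∀ i, ξ i 0 = 0)
    (hchain : ∀ i : Fin m, ∀ j : ℕ, 1 ≤ j → j ≤ jsz i →
      (γ.map Complex.ofReal).mulVec (ξ i j) = Complex.exp (Complex.I * θ0) • ξ i j - ξ i (j - 1))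
    (hη : ∀ i j, η i j = ((-Complex.I) * Complex.exp (Complex.I * θ0)) ^ j • ξ i j)
    (i i' : Fin m) (hlt : jsz i' < jsz i) :
    krein n (η i' (jsz i')) (η i 1) = 0 :=
  krein_X_block_upper_triangular_general n m γ hγ θ0 jsz ξ η hzero hchain hη i i' hlt
end

section
/- Let γ : ℂ ⊇ B(0,r) → M_{2n}(ℂ) be analytic, solving dγ/dz = J A(z) γ(z) with z ↦ A(z) analytic, A(t) real symmetric for real t, γ(0) real symplectic, and suppose ⟨A(0)ξ, ξ⟩ > 0 for every unit eigenvector ξ of γ(0) associated with an eigenvalue on the unit circle. Then there exists δ > 0 such that for all non-real z with |z| < δ, the matrix γ(z) has no eigenvalue on the unit circle. -/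
open Matrix Complex Metric

/-!
Write `J = Jmat n`. By the identity theorem, `A` is symmetric on the whole ball and
`A(z̄) = conj A(z)`; hence `Mᵀ J N` is constant for any two solutions `M, N` of `Y' = J A Y`.
Applied to `γ` itself and to `z ↦ conj γ(z̄)` this gives `γ(z)ᵀ J γ(z) = J` and
`γ(z̄) = conj γ(z)`.

If `γ(ζ) x = μ x` with `|μ| = 1`, then `x* γ(ζ̄)ᵀ J γ(ζ) x = |μ|² x* J x = x* γ(ζ)ᵀ J γ(ζ) x`,
so `x* Q(ζ) x = 0` for the difference quotient `Q(ζ) = ((γ(ζ̄) - γ(ζ)) / (ζ̄ - ζ))ᵀ J γ(ζ)`.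
As `ζ → 0` off the real axis, `Q(ζ) → γ'(0)ᵀ J γ(0) = γ(0)ᵀ A(0) γ(0)` by strict
differentiability, and for a unit eigenvector of `γ(0)` with unimodular eigenvalue,
`x* γ(0)ᵀ A(0) γ(0) x = x* A(0) x > 0`. Compactness of the unit spheres makes this positivity
persist for unit eigenvectors of `γ(ζ)` and the form `Q(ζ)` when `ζ` is small, contradicting
`x* Q(ζ) x = 0`.
-/

open ComplexConjugate Filter Topology

theorem hasDerivAt_matrix_mul {𝕜 : Type*} [NontriviallyNormedField 𝕜]
    {l m p : Type*} [Fintype m] {M : 𝕜 → Matrix l m 𝕜} {N : 𝕜 → Matrix m p 𝕜}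
    {M' : Matrix l m 𝕜} {N' : Matrix m p 𝕜} {z : 𝕜}
    (hM : ∀ i j, HasDerivAt (fun w => M w i j) (M' i j) z)
    (hN : ∀ i j, HasDerivAt (fun w => N w i j) (N' i j) z) (i : l) (k : p) :
    HasDerivAt (fun w => (M w * N w) i k) ((M' * N z + M z * N') i k) z := by
  simp only [mul_apply, Matrix.add_apply, ← Finset.sum_add_distrib]
  exact HasDerivAt.fun_sum fun j _ => (hM i j).fun_mul (hN j k)

theorem HasStrictDerivAt.tendsto_slope {𝕜 F : Type*} [NontriviallyNormedField 𝕜]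
    [NormedAddCommGroup F] [NormedSpace 𝕜 F] {f : 𝕜 → F} {f' : F} {x : 𝕜}
    (hf : HasStrictDerivAt f f' x) :
    Tendsto (fun p : 𝕜 × 𝕜 => slope f p.1 p.2) (𝓝 (x, x) ⊓ 𝓟 {p | p.1 ≠ p.2}) (𝓝 f') := by
  have h := (hasDerivAtFilter_iff_tendsto.1 hf).mono_left (inf_le_left (b := 𝓟 {p | p.1 ≠ p.2}))
  rw [tendsto_iff_norm_sub_tendsto_zero]
  refine h.congr' (eventually_inf_principal.2 (Eventually.of_forall fun p hp => ?_))
  have hp' : p.1 - p.2 ≠ 0 := sub_ne_zero.2 hp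
  change _ = ‖slope f p.1 p.2 - f'‖
  rw [slope_comm, slope_def_module, ← norm_inv, ← norm_smul, smul_sub (p.1 - p.2)⁻¹, smul_smul,
    inv_mul_cancel₀ hp', one_smul]

theorem HasStrictDerivAt.tendsto_slope_conj {F : Type*} [NormedAddCommGroup F] [NormedSpace ℂ F]
    {f : ℂ → F} {f' : F} (hf : HasStrictDerivAt f f' 0) :
    Tendsto (fun ζ => slope f ζ (conj ζ)) (𝓝[{z : ℂ | z.im ≠ 0}] 0) (𝓝 f') := by
  have hpair : Tendsto (fun ζ : ℂ => (ζ, conj ζ)) (𝓝[{z : ℂ | z.im ≠ 0}] 0)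
      (𝓝 (0, 0) ⊓ 𝓟 {p | p.1 ≠ p.2}) := by
    refine tendsto_inf.2 ⟨?_, tendsto_principal.2 ?_⟩
    · have h : Continuous fun ζ : ℂ => (ζ, conj ζ) := by fun_prop
      exact (h.tendsto' 0 (0, 0) (by simp)).mono_left nhdsWithin_le_nhds
    · filter_upwards [self_mem_nhdsWithin] with ζ hζ h
      exact hζ (conj_eq_iff_im.1 h.symm)
  simpa only [Function.comp_def] using hf.tendsto_slope.comp hpair

theorem eqOn_ball_of_eq_ofReal {E : Type*} [NormedAddCommGroup E] [NormedSpace ℂ E]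
    {f g : ℂ → E} {r : ℝ} (hf : AnalyticOnNhd ℂ f (ball 0 r)) (hg : AnalyticOnNhd ℂ g (ball 0 r))
    (h : ∀ t : ℝ, (t : ℂ) ∈ ball (0 : ℂ) r → f t = g t) : Set.EqOn f g (ball 0 r) := by
  rcases lt_or_ge 0 r with hr | hr
  · refine hf.eqOn_of_preconnected_of_frequently_eq hg (convex_ball _ _).isPreconnected
      (mem_ball_self hr) ?_
    have hreal : ∀ᶠ t : ℝ in 𝓝[≠] 0, f t = g t :=
      eventually_nhdsWithin_of_eventually_nhds <|
        (continuous_ofReal.tendsto' 0 0 ofReal_zero).eventually (ball_mem_nhds 0 hr) |>.mono h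
    have hmaps : Tendsto ofReal (𝓝[≠] 0) (𝓝[≠] 0) :=
      continuous_ofReal.continuousWithinAt.tendsto_nhdsWithin fun t ht => by simpa using ht
    exact hmaps.frequently hreal.frequently
  · simp [ball_eq_empty.2 hr]

theorem star_dotProduct_conjTranspose_mul_mul_mulVec {𝕜 ι : Type*} [RCLike 𝕜] [Fintype ι]
    {M : Matrix ι ι 𝕜} (B : Matrix ι ι 𝕜) {x : ι → 𝕜} {μ : 𝕜} (hμ : ‖μ‖ = 1)
    (hx : M *ᵥ x = μ • x) :
    star x ⬝ᵥ ((Mᴴ * B * M) *ᵥ x) = star x ⬝ᵥ (B *ᵥ x) := by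
  have hμμ : star μ * μ = 1 := by
    rw [RCLike.star_def, RCLike.conj_mul, hμ]; simp
  rw [← mulVec_mulVec, ← mulVec_mulVec, hx, dotProduct_mulVec, ← star_mulVec, hx, mulVec_smul,
    star_smul, smul_dotProduct, dotProduct_smul, smul_smul, smul_eq_mul, hμμ, one_mul]

theorem eventually_forall_unit_eigenvector_re_pos {ι : Type*} [Fintype ι] {N₀ P : Matrix ι ι ℂ}
    (h : ∀ μ : ℂ, ‖μ‖ = 1 → ∀ x : ι → ℂ, ‖x‖ = 1 → N₀ *ᵥ x = μ • x →
      0 < (star x ⬝ᵥ (P *ᵥ x)).re) :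
    ∀ᶠ NQ : Matrix ι ι ℂ × Matrix ι ι ℂ in 𝓝 (N₀, P), ∀ μ : ℂ, ‖μ‖ = 1 → ∀ x : ι → ℂ,
      ‖x‖ = 1 → NQ.1 *ᵥ x = μ • x → 0 < (star x ⬝ᵥ (NQ.2 *ᵥ x)).re := by
  have hK : IsCompact (sphere (0 : ℂ) 1 ×ˢ sphere (0 : ι → ℂ) 1) :=
    (isCompact_sphere _ _).prod (isCompact_sphere _ _)
  refine (hK.eventually_forall_of_forall_eventually (P := fun NQ y =>
      NQ.1 *ᵥ y.2 = y.1 • y.2 → 0 < (star y.2 ⬝ᵥ (NQ.2 *ᵥ y.2)).re) ?_).mono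
    fun NQ hNQ μ hμ x hx => hNQ (μ, x) ⟨by simpa using hμ, by simpa using hx⟩
  rintro ⟨μ, x⟩ ⟨hμ, hx⟩
  by_cases heig : N₀ *ᵥ x = μ • x
  · have hcont : Continuous fun z : (Matrix ι ι ℂ × Matrix ι ι ℂ) × (ℂ × (ι → ℂ)) =>
        (star z.2.2 ⬝ᵥ (z.1.2 *ᵥ z.2.2)).re := by fun_prop
    refine (continuousAt_const.eventually_lt hcont.continuousAt ?_).mono fun _ hz _ => hz
    exact h μ (by simpa using hμ) x (by simpa using hx) heig
  · have hopen : IsOpen {z : (Matrix ι ι ℂ × Matrix ι ι ℂ) × (ℂ × (ι → ℂ)) |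
        z.1.1 *ᵥ z.2.2 ≠ z.2.1 • z.2.2} := isOpen_ne_fun (by fun_prop) (by fun_prop)
    exact (hopen.eventually_mem (show ((N₀, P), (μ, x)) ∈ _ from heig)).mono
      fun _ hz heq => absurd heq hz

theorem Jmat_transpose (n : ℕ) : (Jmat n)ᵀ = -Jmat n := by
  simp only [Jmat, fromBlocks_transpose, fromBlocks_neg, transpose_zero, transpose_one,
    transpose_neg, neg_neg, neg_zero]

theorem Jmat_mul_self (n : ℕ) : Jmat n * Jmat n = -1 := by
  simp only [Jmat, fromBlocks_multiply, ← fromBlocks_one, fromBlocks_neg, mul_zero, mul_one,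
    mul_neg, zero_add, add_zero, neg_zero]

theorem JmatR_map_ofReal (n : ℕ) : (JmatR n).map ofReal = Jmat n := by
  simp [JmatR, Jmat, fromBlocks_map, Matrix.map_neg]

theorem map_ofReal_map_conj {m p : Type*} (M : Matrix m p ℝ) :
    (M.map ofReal).map conj = M.map ofReal := by
  rw [Matrix.map_map]
  exact congrArg _ (funext conj_ofReal)

theorem transpose_eq_conjTranspose_of_map_conj_eq {m p : Type*} {G : Matrix m p ℂ}
    {G' : Matrix m p ℂ} (h : G'.map conj = G) : G'ᵀ = Gᴴ := by
  subst h
  ext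
  simp

theorem transpose_Jmat_mul_mul_Jmat {n : ℕ} {m : Type*}
    {B : Matrix (Fin n ⊕ Fin n) (Fin n ⊕ Fin n) ℂ} (hB : Bᵀ = B) (M : Matrix (Fin n ⊕ Fin n) m ℂ) :
    (Jmat n * B * M)ᵀ * Jmat n = Mᵀ * B := by
  rw [transpose_mul, transpose_mul, hB, Jmat_transpose, Matrix.mul_assoc, Matrix.mul_assoc,
    Matrix.neg_mul, Jmat_mul_self, neg_neg, Matrix.mul_one]

theorem map_ofReal_transpose_mul_Jmat_mul {n : ℕ} {M : Matrix (Fin n ⊕ Fin n) (Fin n ⊕ Fin n) ℝ}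
    (hM : Mᵀ * JmatR n * M = JmatR n) :
    (M.map ofReal)ᵀ * Jmat n * M.map ofReal = Jmat n := by
  have h := congrArg (Matrix.map · ofRealHom) hM
  simp only [Matrix.map_mul, transpose_map] at h
  rw [← JmatR_map_ofReal]
  exact h

theorem eq_of_transpose_mul_Jmat_mul_eq {n : ℕ} {M N : Matrix (Fin n ⊕ Fin n) (Fin n ⊕ Fin n) ℂ}
    (hM : Mᵀ * Jmat n * M = Jmat n) (hN : Mᵀ * Jmat n * N = Jmat n) : N = M := by
  have hinv : M * (-Jmat n * Mᵀ * Jmat n) = 1 := by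
    refine mul_eq_one_comm.1 ?_
    rw [Matrix.mul_assoc, Matrix.mul_assoc, ← Matrix.mul_assoc Mᵀ, hM, Matrix.neg_mul,
      Jmat_mul_self, neg_neg]
  calc N = M * (-Jmat n * Mᵀ * Jmat n) * N := by rw [hinv, Matrix.one_mul]
    _ = M * (-Jmat n * (Mᵀ * Jmat n * N)) := by simp only [Matrix.mul_assoc]
    _ = M := by rw [hN, Matrix.neg_mul, Jmat_mul_self, neg_neg, Matrix.mul_one]

section RealOnRealAxis

variable {ι κ : Type*} {r : ℝ}

theorem transpose_eq_self_of_ofReal {A : ℂ → Matrix ι ι ℂ}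
    (hA : ∀ i j, AnalyticOnNhd ℂ (fun z => A z i j) (ball (0 : ℂ) r))
    (hreal : ∀ t : ℝ, (t : ℂ) ∈ ball (0 : ℂ) r → (A t)ᵀ = A t)
    {z : ℂ} (hz : z ∈ ball (0 : ℂ) r) : (A z)ᵀ = A z := by
  ext i j
  exact eqOn_ball_of_eq_ofReal (hA j i) (hA i j) (fun t ht => congrFun₂ (hreal t ht) i j) hz

theorem map_conj_comp_conj_eq_of_im_eq_zero {A : ℂ → Matrix ι κ ℂ}
    (hA : ∀ i j, AnalyticOnNhd ℂ (fun z => A z i j) (ball (0 : ℂ) r))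
    (hreal : ∀ t : ℝ, (t : ℂ) ∈ ball (0 : ℂ) r → ∀ i j, (A t i j).im = 0)
    {z : ℂ} (hz : z ∈ ball (0 : ℂ) r) : (A (conj z)).map conj = A z := by
  ext i j
  refine eqOn_ball_of_eq_ofReal (f := fun w => conj (A (conj w) i j)) ?_ (hA i j)
    (fun t ht => ?_) hz
  · refine DifferentiableOn.analyticOnNhd (fun w hw => ?_) isOpen_ball
    have h := (hA i j (conj w) (by simpa using hw)).differentiableAt.conj_conj
    rw [conj_conj] at h
    exact h.differentiableWithinAt
  · simpa [conj_ofReal] using conj_eq_iff_im.2 (hreal t ht i j)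

end RealOnRealAxis

section HamiltonianSystem

variable {n : ℕ} {r : ℝ} {A : ℂ → Matrix (Fin n ⊕ Fin n) (Fin n ⊕ Fin n) ℂ}

theorem transpose_mul_Jmat_mul_eq_of_hasDerivAt {M N : ℂ → Matrix (Fin n ⊕ Fin n) (Fin n ⊕ Fin n) ℂ}
    (hA : ∀ z ∈ ball (0 : ℂ) r, (A z)ᵀ = A z)
    (hM : ∀ z ∈ ball (0 : ℂ) r, ∀ i j, HasDerivAt (fun w => M w i j) ((Jmat n * A z * M z) i j) z)
    (hN : ∀ z ∈ ball (0 : ℂ) r, ∀ i j, HasDerivAt (fun w => N w i j) ((Jmat n * A z * N z) i j) z)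
    {z : ℂ} (hz : z ∈ ball (0 : ℂ) r) :
    (M z)ᵀ * Jmat n * N z = (M 0)ᵀ * Jmat n * N 0 := by
  have hderiv : ∀ w ∈ ball (0 : ℂ) r, ∀ i j,
      HasDerivAt (fun s => ((M s)ᵀ * Jmat n * N s) i j) 0 w := by
    intro w hw i j
    have hMJ := hasDerivAt_matrix_mul (M := fun s => (M s)ᵀ) (M' := (Jmat n * A w * M w)ᵀ)
      (fun i j => hM w hw j i)
      (N := fun _ => Jmat n) (N' := 0) (fun _ _ => hasDerivAt_const w _)
    have h := hasDerivAt_matrix_mul hMJ (hN w hw) i j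
    have hzero : ((Jmat n * A w * M w)ᵀ * Jmat n + (M w)ᵀ * 0) * N w
        + (M w)ᵀ * Jmat n * (Jmat n * A w * N w) = 0 := by
      rw [Matrix.mul_zero, add_zero, transpose_Jmat_mul_mul_Jmat (hA w hw)]
      simp only [Matrix.mul_assoc]
      rw [← Matrix.mul_assoc (Jmat n) (Jmat n), Jmat_mul_self]
      simp
    rwa [hzero] at h
  ext i j
  exact isOpen_ball.is_const_of_deriv_eq_zero (convex_ball _ _).isPreconnected
    (fun w hw => (hderiv w hw i j).differentiableAt.differentiableWithinAt)
    (fun w hw => (hderiv w hw i j).deriv) hz (mem_ball_self (pos_of_mem_ball hz))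

theorem map_conj_comp_conj_eq_of_hasDerivAt {γ : ℂ → Matrix (Fin n ⊕ Fin n) (Fin n ⊕ Fin n) ℂ}
    (hA : ∀ z ∈ ball (0 : ℂ) r, (A z)ᵀ = A z)
    (hAconj : ∀ z ∈ ball (0 : ℂ) r, (A (conj z)).map conj = A z)
    (hγ : ∀ z ∈ ball (0 : ℂ) r, ∀ i j, HasDerivAt (fun w => γ w i j) ((Jmat n * A z * γ z) i j) z)
    (hγ0 : (γ 0)ᵀ * Jmat n * γ 0 = Jmat n) (hγ0conj : (γ 0).map conj = γ 0)
    {z : ℂ} (hz : z ∈ ball (0 : ℂ) r) : (γ (conj z)).map conj = γ z := by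
  have hη : ∀ z ∈ ball (0 : ℂ) r, ∀ i j, HasDerivAt (fun w => (γ (conj w)).map conj i j)
      ((Jmat n * A z * (γ (conj z)).map conj) i j) z := by
    intro z hz i j
    have h := (hγ (conj z) (by simpa using hz) i j).conj_conj
    rw [conj_conj] at h
    have e : Jmat n * A z * (γ (conj z)).map conj
        = (Jmat n * A (conj z) * γ (conj z)).map conj := by
      rw [Matrix.map_mul, Matrix.map_mul, ← JmatR_map_ofReal, map_ofReal_map_conj, hAconj z hz]
    rw [e]
    exact h
  refine eq_of_transpose_mul_Jmat_mul_eq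
    ((transpose_mul_Jmat_mul_eq_of_hasDerivAt hA hγ hγ hz).trans hγ0) ?_
  rw [transpose_mul_Jmat_mul_eq_of_hasDerivAt hA hγ hη hz, map_zero, hγ0conj, hγ0]

theorem tendsto_prodMk_transpose_slope_conj_mul_Jmat_mul
    {γ : ℂ → Matrix (Fin n ⊕ Fin n) (Fin n ⊕ Fin n) ℂ} (hA0 : (A 0)ᵀ = A 0)
    (hγ : ∀ i j, HasStrictDerivAt (fun w => γ w i j) ((Jmat n * A 0 * γ 0) i j) 0) :
    Tendsto (fun ζ => (γ ζ, (slope γ ζ (conj ζ))ᵀ * Jmat n * γ ζ)) (𝓝[{z : ℂ | z.im ≠ 0}] 0)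
      (𝓝 (γ 0, (γ 0)ᵀ * A 0 * γ 0)) := by
  have hslope : Tendsto (fun ζ => slope γ ζ (conj ζ)) (𝓝[{z : ℂ | z.im ≠ 0}] 0)
      (𝓝 (Jmat n * A 0 * γ 0)) :=
    tendsto_pi_nhds.2 fun i => tendsto_pi_nhds.2 fun j => (hγ i j).tendsto_slope_conj
  have hcont : Tendsto γ (𝓝[{z : ℂ | z.im ≠ 0}] 0) (𝓝 (γ 0)) :=
    (continuousAt_pi.2 fun i => continuousAt_pi.2 fun j =>
      (hγ i j).hasDerivAt.continuousAt).tendsto.mono_left nhdsWithin_le_nhds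
  rw [← transpose_Jmat_mul_mul_Jmat hA0]
  have hmul : Continuous fun p : Matrix (Fin n ⊕ Fin n) (Fin n ⊕ Fin n) ℂ × _ =>
      p.1ᵀ * Jmat n * p.2 := by fun_prop
  exact hcont.prodMk_nhds <| by
    simpa only [Function.comp_def] using (hmul.tendsto _).comp (hslope.prodMk_nhds hcont)

theorem star_dotProduct_transpose_slope_mul_Jmat_mul_mulVec_eq_zero
    {γ : ℂ → Matrix (Fin n ⊕ Fin n) (Fin n ⊕ Fin n) ℂ} {a b : ℂ}
    (hJ : (γ a)ᵀ * Jmat n * γ a = Jmat n) (hb : (γ b)ᵀ = (γ a)ᴴ)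
    {x : Fin n ⊕ Fin n → ℂ} {μ : ℂ} (hμ : ‖μ‖ = 1) (hx : γ a *ᵥ x = μ • x) :
    star x ⬝ᵥ (((slope γ a b)ᵀ * Jmat n * γ a) *ᵥ x) = 0 := by
  rw [slope_def_module, transpose_smul, Matrix.smul_mul, Matrix.smul_mul, smul_mulVec,
    dotProduct_smul, transpose_sub, Matrix.sub_mul, Matrix.sub_mul, sub_mulVec, dotProduct_sub, hb,
    star_dotProduct_conjTranspose_mul_mul_mulVec _ hμ hx, hJ, sub_self, smul_zero]

end HamiltonianSystem

/-- For the analytic Hamiltonian system with a Krein-positivity condition at `z = 0`, there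
is a punctured neighbourhood of `0` in which `γ(z)` has no eigenvalue on the unit circle for
non-real `z`. -/
theorem no_unit_eigenvalue_for_nonreal_z (n : ℕ) (r : ℝ) (hr : 0 < r)
    (A γ : ℂ → Matrix (Fin n ⊕ Fin n) (Fin n ⊕ Fin n) ℂ)
    (hAanal : ∀ i j, AnalyticOnNhd ℂ (fun z => A z i j) (ball (0 : ℂ) r))
    (hγanal : ∀ i j, AnalyticOnNhd ℂ (fun z => γ z i j) (ball (0 : ℂ) r))
    (hODE : ∀ z ∈ ball (0 : ℂ) r, ∀ i j,
      HasDerivAt (fun w => γ w i j) ((Jmat n * A z * γ z) i j) z)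
    (hAsymm : ∀ t : ℝ, ((t : ℂ) ∈ ball (0 : ℂ) r) → (A (t : ℂ))ᵀ = A (t : ℂ))
    (hAreal : ∀ t : ℝ, ((t : ℂ) ∈ ball (0 : ℂ) r) → ∀ i j, (A (t : ℂ) i j).im = 0)
    (γ0 : Matrix (Fin n ⊕ Fin n) (Fin n ⊕ Fin n) ℝ)
    (hγ0 : γ0ᵀ * JmatR n * γ0 = JmatR n)
    (hγ0eq : γ 0 = γ0.map Complex.ofReal)
    (hpos : ∀ lam : ℂ, ‖lam‖ = 1 → ∀ ξ : (Fin n ⊕ Fin n) → ℂ, ξ ≠ 0 →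
      (γ 0).mulVec ξ = lam • ξ →
      0 < (∑ j, (A 0).mulVec ξ j * (starRingEnd ℂ) (ξ j)).re) :
    ∃ δ > 0, ∀ z : ℂ, z.im ≠ 0 → ‖z‖ < δ →
      ∀ lam : ℂ, ‖lam‖ = 1 →
        ∀ v : (Fin n ⊕ Fin n) → ℂ, (γ z).mulVec v = lam • v → v = 0 := by
  have h0 : (0 : ℂ) ∈ ball (0 : ℂ) r := mem_ball_self hr
  have hA : ∀ z ∈ ball (0 : ℂ) r, (A z)ᵀ = A z := fun z => transpose_eq_self_of_ofReal hAanal hAsymm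
  have hAconj : ∀ z ∈ ball (0 : ℂ) r, (A (conj z)).map conj = A z :=
    fun z => map_conj_comp_conj_eq_of_im_eq_zero hAanal hAreal
  have hγ0J : (γ 0)ᵀ * Jmat n * γ 0 = Jmat n := hγ0eq ▸ map_ofReal_transpose_mul_Jmat_mul hγ0
  have hγ0conj : (γ 0).map conj = γ 0 := by rw [hγ0eq, map_ofReal_map_conj]
  have hP : ∀ μ : ℂ, ‖μ‖ = 1 → ∀ x, ‖x‖ = 1 → γ 0 *ᵥ x = μ • x →
      0 < (star x ⬝ᵥ (((γ 0)ᵀ * A 0 * γ 0) *ᵥ x)).re := fun μ hμ x hx hxμ => by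
    rw [transpose_eq_conjTranspose_of_map_conj_eq hγ0conj,
      star_dotProduct_conjTranspose_mul_mul_mulVec _ hμ hxμ]
    convert hpos μ hμ x (by rintro rfl; simp at hx) hxμ using 2
    simp [dotProduct, mul_comm]
  have hlim := tendsto_prodMk_transpose_slope_conj_mul_Jmat_mul (hA 0 h0) fun i j =>
    (hγanal i j 0 h0).hasStrictDerivAt.congr_deriv (hODE 0 h0 i j).deriv
  obtain ⟨δ, hδ, hnear⟩ := Metric.eventually_nhds_iff.1 <| eventually_nhdsWithin_iff.1 <|
    (hlim.eventually (eventually_forall_unit_eigenvector_re_pos hP)).and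
      (mem_nhdsWithin_of_mem_nhds (ball_mem_nhds 0 hr))
  refine ⟨δ, hδ, fun z hz hzδ lam hlam v hv => by_contra fun hv0 => ?_⟩
  obtain ⟨hre, hzr⟩ := hnear (by simpa using hzδ) hz
  set u : Fin n ⊕ Fin n → ℂ := (‖v‖⁻¹ : ℂ) • v
  have hu : γ z *ᵥ u = lam • u := by rw [mulVec_smul, hv, smul_comm]
  have hsymp := (transpose_mul_Jmat_mul_eq_of_hasDerivAt hA hODE hODE hzr).trans hγ0J
  have hrefl := transpose_eq_conjTranspose_of_map_conj_eq <|
    map_conj_comp_conj_eq_of_hasDerivAt hA hAconj hODE hγ0J hγ0conj hzr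
  have hQ := hre lam hlam u (norm_smul_inv_norm hv0) hu
  dsimp only at hQ
  rw [star_dotProduct_transpose_slope_mul_Jmat_mul_mulVec_eq_zero hsymp hrefl hlam hu] at hQ
  exact lt_irrefl 0 hQ
end
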